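/- For every natural number n, ∑_{k=0}^{2n+1} (-2)^k · binom(2n+1,k) · H_k / (k+1) = -O_{n+1}/(n+1). -/

import Mathlib

/-- The `n`-th harmonic number `H_n = 1 + 1/2 + ⋯ + 1/n` (with `H_0 = 0`). -/
noncomputable def H (n : ℕ) : ℝ := ∑ i ∈ Finset.range n, 1 / ((i : ℝ) + 1)

/-- The `r`-th odd harmonic number `O_r = ∑_{i=1}^r 1/(2i-1)`. -/
noncomputable def O (r : ℕ) : ℝ := ∑ i ∈ Finset.range r, 1 / (2 * (i : ℝ) + 1)

/-! With `U x N = ∑ₖ C(N,k) xᵏ Hₖ` (`binomHarmonic`), Pascal's rule and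
`H_{k+1} = H_k + 1/(k+1)` give `U x (N+1) = (1+x) U x N + ((1+x)^(N+1) - 1)/(N+1)`. At `x = -2`
the factor `1 + x` is `-1`, so two steps of this recursion add `2/(2m+1)`, whence
`U (-2) (2m) = 2 O_m`. Absorbing the `1/(k+1)` by `C(M,k)/(k+1) = C(M+1,k+1)/(M+1)` turns the sum
into `T (2n+2) / (2n+2)` with `T N = ∑ₖ C(N,k+1) (-2)ᵏ Hₖ` (`binomHarmonicShift`), and Pascal's
rule again gives `T (N+1) = T N + U N`. -/

open Finset

@[simp]
lemma H_zero : H 0 = 0 := by simp [H]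

lemma H_succ (n : ℕ) : H (n + 1) = H n + 1 / ((n : ℝ) + 1) := by
  simp [H, sum_range_succ]

lemma O_succ (n : ℕ) : O (n + 1) = O n + 1 / (2 * (n : ℝ) + 1) := by
  simp [O, sum_range_succ]

lemma cast_choose_div_succ (N k : ℕ) :
    (N.choose k : ℝ) / ((k : ℝ) + 1) = ((N + 1).choose (k + 1) : ℝ) / ((N : ℝ) + 1) := by
  rw [div_eq_div_iff (by positivity) (by positivity), mul_comm]
  exact_mod_cast Nat.add_one_mul_choose_eq N k

lemma sum_choose_mul_div_succ (f : ℕ → ℝ) (M : ℕ) :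
    ∑ k ∈ range (M + 1), (M.choose k : ℝ) * f k / ((k : ℝ) + 1)
      = (∑ k ∈ range (M + 1), ((M + 1).choose (k + 1) : ℝ) * f k) / ((M : ℝ) + 1) := by
  simp_rw [sum_div, mul_div_right_comm, cast_choose_div_succ]

/-- `∑ₖ C(N,k) x^(k+1)/(k+1) = ∫₀ˣ (1+t)^N dt`. -/
lemma sum_choose_mul_pow_succ_div (x : ℝ) (N : ℕ) :
    ∑ k ∈ range (N + 1), (N.choose k : ℝ) * x ^ (k + 1) / ((k : ℝ) + 1)
      = ((1 + x) ^ (N + 1) - 1) / ((N : ℝ) + 1) := by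
  have binomial : (1 + x) ^ (N + 1)
      = ∑ k ∈ range (N + 1), ((N + 1).choose (k + 1) : ℝ) * x ^ (k + 1) + 1 := by
    rw [add_comm, add_pow, sum_range_succ']
    simp [mul_comm]
  rw [sum_choose_mul_div_succ, binomial, add_sub_cancel_right]

lemma one_add_neg_two_pow_even (m : ℕ) : (1 + (-2 : ℝ)) ^ (2 * m + 2) = 1 := by
  norm_num [pow_succ, pow_mul]

lemma one_add_neg_two_pow_odd (m : ℕ) : (1 + (-2 : ℝ)) ^ (2 * m + 1) = -1 := by
  norm_num [pow_succ, pow_mul]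

noncomputable def binomHarmonic (x : ℝ) (N : ℕ) : ℝ :=
  ∑ k ∈ range (N + 1), (N.choose k : ℝ) * (x ^ k * H k)

noncomputable def binomHarmonicShift (x : ℝ) (N : ℕ) : ℝ :=
  ∑ k ∈ range N, ((N.choose (k + 1) : ℝ) * (x ^ k * H k))

lemma binomHarmonic_succ (x : ℝ) (N : ℕ) :
    binomHarmonic x (N + 1)
      = (1 + x) * binomHarmonic x N + ((1 + x) ^ (N + 1) - 1) / ((N : ℝ) + 1) := by
  have pascal := sum_choose_succ_mul (fun k _ => x ^ k * H k) N
  simp only [binomHarmonic, pascal, H_succ, ← sum_choose_mul_pow_succ_div, mul_sum,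
    ← sum_add_distrib]
  refine sum_congr rfl fun k _ => ?_
  ring

lemma binomHarmonicShift_succ (x : ℝ) (N : ℕ) :
    binomHarmonicShift x (N + 1) = binomHarmonicShift x N + binomHarmonic x N := by
  have top : (N.choose (N + 1) : ℝ) = 0 := by simp
  simp only [binomHarmonicShift, binomHarmonic, Nat.choose_succ_succ', Nat.cast_add, add_mul,
    sum_add_distrib, sum_range_succ _ N, top, zero_mul, add_zero]
  ring

lemma binomHarmonic_neg_two_even (m : ℕ) : binomHarmonic (-2) (2 * m) = 2 * O m := by
  induction m with
  | zero => simp [binomHarmonic, O]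
  | succ m ih =>
    rw [show 2 * (m + 1) = 2 * m + 1 + 1 by ring, binomHarmonic_succ, binomHarmonic_succ, ih,
      O_succ]
    simp only [one_add_neg_two_pow_even, one_add_neg_two_pow_odd]
    push_cast
    ring

lemma binomHarmonic_neg_two_odd (m : ℕ) : binomHarmonic (-2) (2 * m + 1) = -2 * O (m + 1) := by
  rw [binomHarmonic_succ, binomHarmonic_neg_two_even, O_succ]
  simp only [one_add_neg_two_pow_odd]
  push_cast
  ring

lemma binomHarmonicShift_neg_two_even (m : ℕ) :
    binomHarmonicShift (-2) (2 * m) = -2 * O m := by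
  induction m with
  | zero => simp [binomHarmonicShift, O]
  | succ m ih =>
    rw [show 2 * (m + 1) = 2 * m + 1 + 1 by ring, binomHarmonicShift_succ, binomHarmonicShift_succ,
      ih, binomHarmonic_neg_two_even, binomHarmonic_neg_two_odd]
    ring

/-- The odd case established at the end of the proof of the paper's main Corollary. -/
theorem stmt_6 (n : ℕ) :
    ∑ k ∈ Finset.range (2 * n + 2),
      (-2 : ℝ) ^ k * ((2 * n + 1).choose k : ℝ) * H k / ((k : ℝ) + 1)
    = -O (n + 1) / ((n : ℝ) + 1) := by
  calc ∑ k ∈ range (2 * n + 2), (-2 : ℝ) ^ k * ((2 * n + 1).choose k : ℝ) * H k / ((k : ℝ) + 1)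
      = ∑ k ∈ range (2 * n + 1 + 1),
          ((2 * n + 1).choose k : ℝ) * ((-2) ^ k * H k) / ((k : ℝ) + 1) :=
        sum_congr rfl fun k _ => by ring
    _ = binomHarmonicShift (-2) (2 * (n + 1)) / (((2 * n + 1 : ℕ) : ℝ) + 1) :=
        sum_choose_mul_div_succ _ _
    _ = -O (n + 1) / ((n : ℝ) + 1) := by
        rw [binomHarmonicShift_neg_two_even]
        push_cast
        field_simp
        ring
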